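/- Let u, v ∈ ℝ³ be orthonormal (‖u‖ = ‖v‖ = 1, u·v = 0), let a, b ∈ ℝ with a² + b² < 1, and set r₀ := a u + b v, ρ₀ := (1/2)(I + r₀·σ), F := u·σ. For θ ∈ ℝ define Z_θ := Tr(ρ₀ exp(θF)) and ρ_θ := Z_θ⁻¹ · exp((θ/2)F) ρ₀ exp((θ/2)F). Then: Z_θ = cosh θ + a sinh θ > 0; setting c := b/√(1−a²) and ξ(θ) := ((1+a)e^{2θ} − (1−a)) / ((1+a)e^{2θ} + (1−a)), one has ξ(θ) ∈ (−1,1) and ρ_θ = (1/2)(I + (ξ(θ) u + c √(1−ξ(θ)²) v)·σ); moreover Tr(ρ_θ F) = ξ(θ). Thus the e-geodesic through ρ₀ generated by F is the semi-ellipse {(1/2)(I + (ξ u + c√(1−ξ²) v)·σ) : −1 < ξ < 1} and ξ is the expectation of F along it. -/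

import Mathlib

open Matrix
open scoped ComplexOrder

noncomputable section

/-- The Pauli matrices. -/
def pauli : Fin 3 → Matrix (Fin 2) (Fin 2) ℂ
  | 0 => !![0, 1; 1, 0]
  | 1 => !![0, -Complex.I; Complex.I, 0]
  | 2 => !![1, 0; 0, -1]

/-- `a·σ` for `a ∈ ℝ³`. -/
def dotSigma (a : Fin 3 → ℝ) : Matrix (Fin 2) (Fin 2) ℂ := ∑ i, a i • pauli i

/-- The qubit state `(1/2)(I + r·σ)`. -/
def qubitState (r : Fin 3 → ℝ) : Matrix (Fin 2) (Fin 2) ℂ :=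
  ((1 : ℝ)/2) • ((1 : Matrix (Fin 2) (Fin 2) ℂ) + dotSigma r)

/-- The normalization `Z_θ := Tr(ρ₀ exp(θF))`. -/
def Zgeo (u v : Fin 3 → ℝ) (a b θ : ℝ) : ℂ :=
  (qubitState (a • u + b • v) * NormedSpace.exp ((θ : ℂ) • dotSigma u)).trace

/-- The e-geodesic `ρ_θ := Z_θ⁻¹ exp((θ/2)F) ρ₀ exp((θ/2)F)`. -/
def rhoGeo (u v : Fin 3 → ℝ) (a b θ : ℝ) : Matrix (Fin 2) (Fin 2) ℂ :=
  (Zgeo u v a b θ)⁻¹ •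
    (NormedSpace.exp (((θ/2 : ℝ) : ℂ) • dotSigma u) * qubitState (a • u + b • v) *
      NormedSpace.exp (((θ/2 : ℝ) : ℂ) • dotSigma u))

/-- The m-affine parameter `ξ(θ)`. -/
def xiGeo (a θ : ℝ) : ℝ :=
  ((1 + a) * Real.exp (2*θ) - (1 - a)) / ((1 + a) * Real.exp (2*θ) + (1 - a))

/-!
With `F = u·σ` and `G = v·σ` one has `F² = 1` and `GF = -FG`. Hence
`exp((θ/2)F) = cosh(θ/2) + sinh(θ/2) F`, and conjugating `ρ₀ = (1 + aF + bG)/2` by it gives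
`((cosh θ + a sinh θ) + (a cosh θ + sinh θ) F + b G)/2`: the part `1 + aF` commutes with `F`
and picks up `exp(θF)`, while `G exp(tF) = exp(-tF) G` leaves the `G` part unchanged.
Since `exp(θF) = exp((θ/2)F)²`, cyclicity of the trace identifies `Z_θ` with the trace of this
matrix, and normalizing yields the Bloch vector `ξ u + (b / Z_θ) v` with
`ξ = (a cosh θ + sinh θ)/Z_θ` and `1 - ξ² = (1 - a²)/Z_θ²`.
-/

lemma dotSigma_add (a b : Fin 3 → ℝ) : dotSigma (a + b) = dotSigma a + dotSigma b := by
  simp only [dotSigma, Pi.add_apply, add_smul, Finset.sum_add_distrib]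

lemma dotSigma_smul (x : ℝ) (a : Fin 3 → ℝ) : dotSigma (x • a) = x • dotSigma a := by
  simp only [dotSigma, Pi.smul_apply, smul_eq_mul, mul_smul, Finset.smul_sum]

lemma trace_pauli (i : Fin 3) : (pauli i).trace = 0 := by
  fin_cases i <;> simp [pauli, trace_fin_two]

lemma trace_dotSigma (a : Fin 3 → ℝ) : (dotSigma a).trace = 0 := by
  simp [dotSigma, trace_sum, trace_pauli]

lemma dotSigma_eq_matrix (a : Fin 3 → ℝ) :
    dotSigma a = !![(a 2 : ℂ), a 0 - a 1 * Complex.I; a 0 + a 1 * Complex.I, -(a 2 : ℂ)] := by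
  ext i j
  fin_cases i <;> fin_cases j <;>
    simp [dotSigma, pauli, Fin.sum_univ_three, Complex.real_smul, sub_eq_add_neg]

lemma dotSigma_mul_add_mul_swap (a b : Fin 3 → ℝ) :
    dotSigma a * dotSigma b + dotSigma b * dotSigma a = (2 * (a ⬝ᵥ b)) • 1 := by
  rw [dotSigma_eq_matrix, dotSigma_eq_matrix]
  ext i j
  fin_cases i <;> fin_cases j <;>
    simp [dotProduct, Fin.sum_univ_three, Complex.real_smul] <;> ring_nf <;> simp [Complex.I_sq]

lemma dotSigma_mul_self (a : Fin 3 → ℝ) : dotSigma a * dotSigma a = (a ⬝ᵥ a) • 1 := by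
  have h := dotSigma_mul_add_mul_swap a a
  rw [← two_smul ℝ, mul_smul] at h
  exact smul_right_injective _ two_ne_zero h

lemma dotSigma_anticomm {a b : Fin 3 → ℝ} (h : a ⬝ᵥ b = 0) :
    dotSigma b * dotSigma a = -(dotSigma a * dotSigma b) := by
  have := dotSigma_mul_add_mul_swap a b
  rw [h, mul_zero, zero_smul] at this
  exact eq_neg_of_add_eq_zero_right this

theorem NormedSpace.exp_smul_of_mul_self_eq_one {A : Type*} [Ring A] [Algebra ℝ A]
    [TopologicalSpace A] [IsTopologicalRing A] [ContinuousSMul ℝ A] [T2Space A]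
    {M : A} (hM : M * M = 1) (t : ℝ) :
    NormedSpace.exp (t • M) = Real.cosh t • 1 + Real.sinh t • M := by
  have hpow : ∀ n : ℕ, M ^ (2 * n) = 1 := fun n => by rw [pow_mul, sq, hM, one_pow]
  rw [NormedSpace.exp_eq_tsum ℝ]
  refine (HasSum.even_add_odd ?_ ?_).tsum_eq
  · convert (Real.hasSum_cosh t).smul_const (1 : A) using 2 with n
    rw [smul_pow, hpow, smul_smul, inv_mul_eq_div]
  · convert (Real.hasSum_sinh t).smul_const M using 2 with n
    rw [smul_pow, pow_succ M, hpow, one_mul, smul_smul, inv_mul_eq_div]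

theorem conj_add_smul_of_anticomm {R A : Type*} [CommRing R] [Ring A] [Algebra R A] {F G : A}
    (hF : F * F = 1) (hGF : G * F = -(F * G)) (c s y z : R) :
    (c • 1 + s • F) * (1 + y • F + z • G) * (c • 1 + s • F) =
      (c ^ 2 + s ^ 2 + 2 * c * s * y) • 1 + ((c ^ 2 + s ^ 2) * y + 2 * c * s) • F +
        ((c ^ 2 - s ^ 2) * z) • G := by
  have hFFG : F * (F * G) = G := by rw [← mul_assoc, hF, one_mul]
  simp only [smul_mul_assoc, mul_add, add_mul, mul_smul_comm, smul_smul, smul_add, one_mul,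
    mul_one, mul_assoc, hF, hGF, hFFG, mul_neg, smul_neg]
  match_scalars <;> ring

lemma smul_qubitState {x : ℝ} (hx : x ≠ 0) (w : Fin 3 → ℝ) :
    x • qubitState (x⁻¹ • w) = ((1 : ℝ) / 2) • (x • 1 + dotSigma w) := by
  rw [qubitState, dotSigma_smul, smul_comm, smul_add, smul_inv_smul₀ hx]

lemma trace_qubitState (r : Fin 3 → ℝ) : (qubitState r).trace = 1 := by
  simp [qubitState, trace_add, trace_dotSigma, Complex.real_smul]

-- `tr (σ(r) σ(u))` is half the trace of the anticommutator `2 (r ⬝ u) • 1`.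
lemma trace_qubitState_mul_dotSigma (r u : Fin 3 → ℝ) :
    (qubitState r * dotSigma u).trace = ((r ⬝ᵥ u : ℝ) : ℂ) := by
  have h := congrArg trace (dotSigma_mul_add_mul_swap r u)
  rw [trace_add, trace_mul_comm (dotSigma u)] at h
  simp only [trace_smul, trace_one, Fintype.card_fin, Complex.real_smul] at h
  rw [qubitState, smul_mul_assoc, trace_smul, add_mul, one_mul, trace_add, trace_dotSigma,
    Complex.real_smul]
  push_cast at h ⊢
  linear_combination h / 4

lemma exp_half_smul_dotSigma {u : Fin 3 → ℝ} (hu : u ⬝ᵥ u = 1) (t : ℝ) :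
    NormedSpace.exp (((t / 2 : ℝ) : ℂ) • dotSigma u) =
      Real.cosh (t / 2) • 1 + Real.sinh (t / 2) • dotSigma u := by
  rw [Complex.coe_smul]
  exact NormedSpace.exp_smul_of_mul_self_eq_one (by rw [dotSigma_mul_self, hu, one_smul]) _

lemma exp_half_smul_mul_self {m : Type*} [Fintype m] [DecidableEq m] (M : Matrix m m ℂ) (t : ℝ) :
    NormedSpace.exp (((t / 2 : ℝ) : ℂ) • M) * NormedSpace.exp (((t / 2 : ℝ) : ℂ) • M) =
      NormedSpace.exp ((t : ℂ) • M) := by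
  rw [← Matrix.exp_add_of_commute _ _ (Commute.refl _), ← add_smul]
  push_cast
  ring_nf

lemma exp_mul_qubitState_mul_exp {u v : Fin 3 → ℝ} (hu : u ⬝ᵥ u = 1) (huv : u ⬝ᵥ v = 0)
    (a b t : ℝ) :
    NormedSpace.exp (((t / 2 : ℝ) : ℂ) • dotSigma u) * qubitState (a • u + b • v) *
        NormedSpace.exp (((t / 2 : ℝ) : ℂ) • dotSigma u) =
      ((1 : ℝ) / 2) • ((Real.cosh t + a * Real.sinh t) • 1 +
        dotSigma ((a * Real.cosh t + Real.sinh t) • u + b • v)) := by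
  have hF : dotSigma u * dotSigma u = 1 := by rw [dotSigma_mul_self, hu, one_smul]
  have hcosh : Real.cosh (t / 2) ^ 2 + Real.sinh (t / 2) ^ 2 = Real.cosh t := by
    rw [← Real.cosh_two_mul, mul_div_cancel₀ _ two_ne_zero]
  have hsinh : 2 * Real.cosh (t / 2) * Real.sinh (t / 2) = Real.sinh t := by
    rw [mul_right_comm, ← Real.sinh_two_mul, mul_div_cancel₀ _ two_ne_zero]
  rw [exp_half_smul_dotSigma hu, qubitState, mul_smul_comm, smul_mul_assoc,
    dotSigma_add, dotSigma_smul, dotSigma_smul, ← add_assoc,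
    conj_add_smul_of_anticomm hF (dotSigma_anticomm huv), Real.cosh_sq_sub_sinh_sq,
    hcosh, hsinh, one_mul, dotSigma_add, dotSigma_smul, dotSigma_smul, ← add_assoc]
  congr 4 <;> ring

namespace Real

lemma cosh_add_mul_sinh_pos {a : ℝ} (ha : a ^ 2 < 1) (t : ℝ) : 0 < cosh t + a * sinh t := by
  obtain ⟨ha₁, ha₂⟩ := abs_lt.mp ((sq_lt_one_iff_abs_lt_one a).mp ha)
  rw [cosh_eq, sinh_eq]
  nlinarith [exp_pos t, exp_pos (-t)]

end Real

-- Both numerator and denominator of `xiGeo` carry the factor `2 e^θ`.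
lemma xiGeo_eq (a θ : ℝ) :
    xiGeo a θ = (a * Real.cosh θ + Real.sinh θ) / (Real.cosh θ + a * Real.sinh θ) := by
  have h : 2 * Real.exp θ ≠ 0 := by positivity
  rw [xiGeo, ← mul_div_mul_left _ _ h, Real.cosh_eq, Real.sinh_eq, Real.exp_neg,
    show 2 * θ = θ + θ by ring, Real.exp_add]
  field_simp
  ring

lemma xiGeo_mem_Ioo {a : ℝ} (ha : a ^ 2 < 1) (θ : ℝ) : xiGeo a θ ∈ Set.Ioo (-1) 1 := by
  obtain ⟨ha₁, ha₂⟩ := abs_lt.mp ((sq_lt_one_iff_abs_lt_one a).mp ha)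
  have he := Real.exp_pos (2 * θ)
  have hD : 0 < (1 + a) * Real.exp (2 * θ) + (1 - a) := by nlinarith
  rw [xiGeo, Set.mem_Ioo, lt_div_iff₀ hD, div_lt_one hD]
  constructor <;> nlinarith

lemma sqrt_one_sub_xiGeo_sq {a : ℝ} (ha : a ^ 2 < 1) (θ : ℝ) :
    √(1 - xiGeo a θ ^ 2) = √(1 - a ^ 2) / (Real.cosh θ + a * Real.sinh θ) := by
  have hZ := Real.cosh_add_mul_sinh_pos ha θ
  have h : 1 - xiGeo a θ ^ 2 = (1 - a ^ 2) / (Real.cosh θ + a * Real.sinh θ) ^ 2 := by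
    rw [xiGeo_eq]
    field_simp
    linear_combination (1 - a ^ 2) * Real.cosh_sq_sub_sinh_sq θ
  rw [h, Real.sqrt_div' _ (sq_nonneg _), Real.sqrt_sq hZ.le]

theorem qubit_e_geodesic_general (u v : Fin 3 → ℝ)
    (hu : u ⬝ᵥ u = 1) (huv : u ⬝ᵥ v = 0)
    (a b : ℝ) (hab : a^2 + b^2 < 1) (θ : ℝ) :
    Zgeo u v a b θ = ((Real.cosh θ + a * Real.sinh θ : ℝ) : ℂ) ∧
    0 < Real.cosh θ + a * Real.sinh θ ∧
    -1 < xiGeo a θ ∧ xiGeo a θ < 1 ∧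
    rhoGeo u v a b θ =
      qubitState (xiGeo a θ • u +
        ((b / Real.sqrt (1 - a^2)) * Real.sqrt (1 - (xiGeo a θ)^2)) • v) ∧
    (rhoGeo u v a b θ * dotSigma u).trace = ((xiGeo a θ : ℝ) : ℂ) := by
  have ha : a ^ 2 < 1 := by nlinarith [sq_nonneg b]
  set Z := Real.cosh θ + a * Real.sinh θ with hZdef
  have hZ : 0 < Z := Real.cosh_add_mul_sinh_pos ha θ
  have hcoeff : b / √(1 - a ^ 2) * √(1 - xiGeo a θ ^ 2) = Z⁻¹ * b := by
    have hs : √(1 - a ^ 2) ≠ 0 := (Real.sqrt_pos.mpr (by linarith)).ne'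
    rw [sqrt_one_sub_xiGeo_sq ha, ← hZdef]
    field_simp
  set r := xiGeo a θ • u + (Z⁻¹ * b) • v with hr
  have hconj : NormedSpace.exp (((θ / 2 : ℝ) : ℂ) • dotSigma u) * qubitState (a • u + b • v) *
      NormedSpace.exp (((θ / 2 : ℝ) : ℂ) • dotSigma u) = Z • qubitState r := by
    rw [exp_mul_qubitState_mul_exp hu huv, ← smul_qubitState hZ.ne', hr, xiGeo_eq, smul_add,
      smul_smul, smul_smul, div_eq_inv_mul]
  have hZgeo : Zgeo u v a b θ = Z := by
    rw [Zgeo, ← exp_half_smul_mul_self, ← mul_assoc, trace_mul_comm, ← mul_assoc, hconj,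
      trace_smul, trace_qubitState, Complex.real_smul, mul_one]
  have hrho : rhoGeo u v a b θ = qubitState r := by
    rw [rhoGeo, hconj, hZgeo, ← Complex.ofReal_inv, Complex.coe_smul, inv_smul_smul₀ hZ.ne']
  refine ⟨hZgeo, hZ, (xiGeo_mem_Ioo ha θ).1, (xiGeo_mem_Ioo ha θ).2, by rw [hrho, hcoeff], ?_⟩
  rw [hrho, trace_qubitState_mul_dotSigma, hr, add_dotProduct, smul_dotProduct, smul_dotProduct,
    hu, dotProduct_comm, huv]
  simp

/-- The e-geodesic through `ρ₀ = (1/2)(I + (au+bv)·σ)` generated by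
`F = u·σ` is the semi-ellipse `ξ ↦ (1/2)(I + (ξu + c√(1−ξ²)v)·σ)`, with
`Z_θ = cosh θ + a sinh θ > 0`, `ξ(θ) ∈ (−1,1)` and `Tr(ρ_θ F) = ξ(θ)`. -/
theorem qubit_e_geodesic (u v : Fin 3 → ℝ)
    (hu : u ⬝ᵥ u = 1) (hv : v ⬝ᵥ v = 1) (huv : u ⬝ᵥ v = 0)
    (a b : ℝ) (hab : a^2 + b^2 < 1) (θ : ℝ) :
    Zgeo u v a b θ = ((Real.cosh θ + a * Real.sinh θ : ℝ) : ℂ) ∧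
    0 < Real.cosh θ + a * Real.sinh θ ∧
    -1 < xiGeo a θ ∧ xiGeo a θ < 1 ∧
    rhoGeo u v a b θ =
      qubitState (xiGeo a θ • u +
        ((b / Real.sqrt (1 - a^2)) * Real.sqrt (1 - (xiGeo a θ)^2)) • v) ∧
    (rhoGeo u v a b θ * dotSigma u).trace = ((xiGeo a θ : ℝ) : ℂ) :=
  qubit_e_geodesic_general u v hu huv a b hab θ
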